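/- For the complete graph K_n and any integer k with 3 ≤ k ≤ n, the pendant-tree k-edge-connectivity satisfies μ_k(K_n) = n − k. -/

import Mathlib

/-!
Fix `s ∈ S`. In a pendant `S`-Steiner tree the unique neighbour of `s` lies outside `S`: two
adjacent leaves of a tree are all of it, which is impossible once `|S| ≥ 3`. Edge-disjoint trees
use distinct edges at `s`, so they have distinct such neighbours and there are at most `n - k` of
them. Conversely, the stars with leaf set `S` centred at the `n - k` vertices outside `S` are
edge-disjoint pendant `S`-Steiner trees of `K_n`.
-/

open SimpleGraph

/-- A pendant `S`-Steiner tree in `G`: a subgraph `T` of `G` that is a tree,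
contains `S`, and in which every vertex of `S` has degree 1. -/
def IsPendantSTree {V : Type*} (G : SimpleGraph V) (S : Set V) (T : G.Subgraph) : Prop :=
  S ⊆ T.verts ∧ T.coe.IsTree ∧ ∀ v ∈ S, (T.neighborSet v).ncard = 1

/-- A family of pairwise internally disjoint pendant `S`-Steiner trees. -/
def IsIntDisjointFamily {V : Type*} (G : SimpleGraph V) (S : Set V)
    (F : Finset G.Subgraph) : Prop :=
  (∀ T ∈ F, IsPendantSTree G S T) ∧
  ∀ T ∈ F, ∀ T' ∈ F, T ≠ T' →
    T.edgeSet ∩ T'.edgeSet = ∅ ∧ T.verts ∩ T'.verts = S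

/-- A family of pairwise edge-disjoint pendant `S`-Steiner trees. -/
def IsEdgeDisjointFamily {V : Type*} (G : SimpleGraph V) (S : Set V)
    (F : Finset G.Subgraph) : Prop :=
  (∀ T ∈ F, IsPendantSTree G S T) ∧
  ∀ T ∈ F, ∀ T' ∈ F, T ≠ T' → T.edgeSet ∩ T'.edgeSet = ∅

/-- `τ(S)`: the maximum number of pairwise internally disjoint pendant `S`-Steiner trees. -/
noncomputable def tauLocal {V : Type*} (G : SimpleGraph V) (S : Set V) : ℕ :=
  sSup {n | ∃ F : Finset G.Subgraph, F.card = n ∧ IsIntDisjointFamily G S F}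

/-- Pendant-tree `k`-connectivity `τ_k(G)`. -/
noncomputable def tau {V : Type*} (G : SimpleGraph V) (k : ℕ) : ℕ :=
  sInf {n | ∃ S : Finset V, S.card = k ∧ tauLocal G ↑S = n}

/-- `μ(S)`: the maximum number of pairwise edge-disjoint pendant `S`-Steiner trees. -/
noncomputable def muLocal {V : Type*} (G : SimpleGraph V) (S : Set V) : ℕ :=
  sSup {n | ∃ F : Finset G.Subgraph, F.card = n ∧ IsEdgeDisjointFamily G S F}

/-- Pendant-tree `k`-edge-connectivity `μ_k(G)`. -/
noncomputable def mu {V : Type*} (G : SimpleGraph V) (k : ℕ) : ℕ :=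
  sInf {n | ∃ S : Finset V, S.card = k ∧ muLocal G ↑S = n}

/-- Vertex connectivity (cut version): the least size of a vertex set whose removal
disconnects the graph or leaves at most one vertex. -/
noncomputable def kappa {V : Type*} [Fintype V] (G : SimpleGraph V) : ℕ :=
  sInf {n | ∃ S : Finset V, S.card = n ∧
    (¬ ((⊤ : G.Subgraph).deleteVerts ↑S).coe.Connected ∨ Fintype.card V - S.card ≤ 1)}

/-- Edge connectivity: the least size of an edge set whose removal disconnects the graph. -/
noncomputable def edgeConn {V : Type*} (G : SimpleGraph V) : ℕ :=
  sInf {n | ∃ F : Finset (Sym2 V), F.card = n ∧ ↑F ⊆ G.edgeSet ∧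
    ¬ (G.deleteEdges ↑F).Connected}

/-- Edges of `G` with one endpoint in `S` and the other outside `S`. -/
def crossEdges {V : Type*} (G : SimpleGraph V) (S : Set V) : Set (Sym2 V) :=
  {e | e ∈ G.edgeSet ∧ ∃ u v, e = s(u, v) ∧ u ∈ S ∧ v ∉ S}

namespace SimpleGraph

variable {V : Type*} {G : SimpleGraph V} {S : Set V} {v w : V}

lemma Subgraph.Connected.verts_subset_pair {T : G.Subgraph} (hT : T.Connected) {u v : V}
    (hu : T.neighborSet u = {v}) (hv : T.neighborSet v = {u}) : T.verts ⊆ {u, v} := by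
  have huT : u ∈ T.verts := T.edge_vert (show v ∈ T.neighborSet u by simp [hu])
  intro w hw
  obtain ⟨p⟩ := hT.preconnected ⟨u, huT⟩ ⟨w, hw⟩
  suffices ∀ {a b : T.verts}, T.coe.Walk a b → (a : V) ∈ ({u, v} : Set V) →
      (b : V) ∈ ({u, v} : Set V) from this p (by simp)
  intro a b q
  induction q with
  | nil => exact id
  | @cons a c b hac _ ih =>
    intro ha
    have hc : (c : V) ∈ T.neighborSet a := hac
    apply ih
    rcases ha with ha | ha
    · rw [ha, hu] at hc
      exact Or.inr hc
    · rw [ha, hv] at hc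
      exact Or.inl hc

def starSubgraph (G : SimpleGraph V) (v : V) (S : Set V) : G.Subgraph :=
  (toSubgraph (G ⊓ starGraph v) inf_le_left).induce (insert v S)

@[simp]
lemma starSubgraph_adj {a b : V} :
    (G.starSubgraph v S).Adj a b ↔
      a ∈ insert v S ∧ b ∈ insert v S ∧ G.Adj a b ∧ (a = v ∨ b = v) := by
  simp only [starSubgraph, Subgraph.induce_adj, toSubgraph_adj, inf_adj, starGraph_adj]
  grind [G.ne_of_adj]

lemma coe_starSubgraph (hS : S ⊆ G.neighborSet v) :
    (G.starSubgraph v S).coe = starGraph ⟨v, Set.mem_insert v S⟩ := by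
  ext ⟨a, ha⟩ ⟨b, hb⟩
  simp only [Subgraph.coe_adj, starSubgraph_adj, starGraph_adj, ne_eq, Subtype.ext_iff]
  refine ⟨fun h => ⟨G.ne_of_adj h.2.2.1, h.2.2.2⟩, fun ⟨hab, hv⟩ => ⟨ha, hb, ?_, hv⟩⟩
  rcases hv with rfl | rfl
  · exact hS (hb.resolve_left (Ne.symm hab))
  · exact (hS (ha.resolve_left hab)).symm

lemma starSubgraph_edgeSet_inter (hv : v ∉ S) (hvw : v ≠ w) :
    (G.starSubgraph v S).edgeSet ∩ (G.starSubgraph w S).edgeSet = ∅ := by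
  refine Set.eq_empty_of_forall_notMem fun e ⟨hev, hew⟩ => ?_
  induction e with
  | h a b =>
    simp only [Subgraph.mem_edgeSet, starSubgraph_adj, Set.mem_insert_iff] at hev hew
    grind

lemma starSubgraph_injOn : Set.InjOn (G.starSubgraph · S) Sᶜ := by
  intro v hv w _ h
  have hvw : v ∈ (G.starSubgraph w S).verts := by
    rw [← show G.starSubgraph v S = G.starSubgraph w S from h]
    exact Set.mem_insert v S
  exact hvw.resolve_right hv

end SimpleGraph

section

variable {V : Type*} {G : SimpleGraph V} {S : Set V} {T : G.Subgraph}

lemma IsPendantSTree.neighborSet_eq (hT : IsPendantSTree G S T) {s v : V} (hs : s ∈ S)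
    (hsv : T.Adj s v) : T.neighborSet s = {v} := by
  obtain ⟨a, ha⟩ := Set.ncard_eq_one.mp (hT.2.2 s hs)
  have hv : v ∈ T.neighborSet s := hsv
  rw [ha, Set.mem_singleton_iff] at hv
  rw [ha, hv]

-- Two adjacent leaves of a tree are all of it.
lemma IsPendantSTree.subset_pair_of_adj (hT : IsPendantSTree G S T) {s v : V} (hs : s ∈ S)
    (hv : v ∈ S) (hsv : T.Adj s v) : S ⊆ {s, v} :=
  hT.1.trans <| Subgraph.Connected.verts_subset_pair ⟨hT.2.1.connected⟩
    (hT.neighborSet_eq hs hsv) (hT.neighborSet_eq hv hsv.symm)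

lemma isPendantSTree_starSubgraph (hv : v ∉ S) (hS : S ⊆ G.neighborSet v) :
    IsPendantSTree G S (G.starSubgraph v S) := by
  refine ⟨Set.subset_insert v S, coe_starSubgraph hS ▸ isTree_starGraph _, fun s hs => ?_⟩
  have hsv : s ≠ v := ne_of_mem_of_not_mem hs hv
  suffices (G.starSubgraph v S).neighborSet s = {v} by simp [this]
  ext w
  simp only [Subgraph.mem_neighborSet, starSubgraph_adj, hsv, false_or, Set.mem_singleton_iff]
  refine ⟨fun h => h.2.2.2, ?_⟩
  rintro rfl
  exact ⟨Set.mem_insert_of_mem _ hs, Set.mem_insert _ _, (hS hs).symm, rfl⟩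

lemma exists_isEdgeDisjointFamily_card_eq {C : Finset V} (hCS : Disjoint (C : Set V) S)
    (hC : ∀ v ∈ C, S ⊆ G.neighborSet v) :
    ∃ F : Finset G.Subgraph, F.card = C.card ∧ IsEdgeDisjointFamily G S F := by
  classical
  have hCS : ∀ v ∈ C, v ∉ S := fun v hv => Set.disjoint_left.mp hCS hv
  refine ⟨C.image (G.starSubgraph · S),
    Finset.card_image_of_injOn (starSubgraph_injOn.mono hCS), ?_, ?_⟩
  · intro T hT
    obtain ⟨v, hv, rfl⟩ := Finset.mem_image.mp hT
    exact isPendantSTree_starSubgraph (hCS v hv) (hC v hv)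
  · intro T hT T' hT' hne
    obtain ⟨v, hv, rfl⟩ := Finset.mem_image.mp hT
    obtain ⟨w, -, rfl⟩ := Finset.mem_image.mp hT'
    exact starSubgraph_edgeSet_inter (hCS v hv) (fun h => hne (h ▸ rfl))

end

lemma IsEdgeDisjointFamily.card_le_card_neighborFinset_sdiff {V : Type*} [Fintype V]
    [DecidableEq V] {G : SimpleGraph V} [DecidableRel G.Adj] {S : Finset V} (hS : 3 ≤ S.card)
    {F : Finset G.Subgraph} (hF : IsEdgeDisjointFamily G S F) {s : V} (hs : s ∈ S) :
    F.card ≤ (G.neighborFinset s \ S).card := by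
  refine Finset.card_le_card_of_forall_subsingleton (fun T v => T.Adj s v) ?_ ?_
  · intro T hT
    have hpend := hF.1 T hT
    obtain ⟨v, hsv⟩ := Set.nonempty_of_ncard_ne_zero
      (s := T.neighborSet s) (by simp [hpend.2.2 s hs])
    refine ⟨v, Finset.mem_sdiff.mpr ⟨by simpa using T.adj_sub hsv, fun hvS => ?_⟩, hsv⟩
    have hSsv : S ⊆ {s, v} := by
      rw [← Finset.coe_subset, Finset.coe_pair]
      exact hpend.subset_pair_of_adj hs hvS hsv
    have := (Finset.card_le_card hSsv).trans Finset.card_le_two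
    omega
  · intro v _ T ⟨hT, hsv⟩ T' ⟨hT', hsv'⟩
    by_contra hne
    have hdisj := hF.2 T hT T' hT' hne
    exact (Set.eq_empty_iff_forall_notMem.mp hdisj) s(s, v) ⟨hsv, hsv'⟩

theorem muLocal_top {V : Type*} [Fintype V] {S : Finset V} (hS : 3 ≤ S.card) :
    muLocal (⊤ : SimpleGraph V) S = Fintype.card V - S.card := by
  classical
  refine IsGreatest.csSup_eq ⟨?_, ?_⟩
  · obtain ⟨F, hF, hFam⟩ := exists_isEdgeDisjointFamily_card_eq (G := ⊤) (C := Sᶜ)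
      (by simpa using disjoint_compl_left)
      (fun v hv s hs => by simpa using ne_of_mem_of_not_mem hs (Finset.mem_compl.mp hv))
    exact ⟨F, by rw [hF, Finset.card_compl], hFam⟩
  · rintro m ⟨F, rfl, hF⟩
    obtain ⟨s, hs⟩ : S.Nonempty := Finset.card_pos.mp (by omega)
    calc F.card ≤ ((⊤ : SimpleGraph V).neighborFinset s \ S).card :=
          hF.card_le_card_neighborFinset_sdiff hS hs
      _ = Fintype.card V - S.card := by
          rw [neighborFinset_top, sdiff_eq,
            inf_eq_right.mpr (compl_le_compl (Finset.singleton_subset_iff.mpr hs)),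
            Finset.card_compl]

theorem mu_top {V : Type*} [Fintype V] {k : ℕ} (hk : 3 ≤ k) (hkV : k ≤ Fintype.card V) :
    mu (⊤ : SimpleGraph V) k = Fintype.card V - k := by
  obtain ⟨S₀, -, hS₀⟩ := Finset.exists_subset_card_eq (s := Finset.univ) (n := k) hkV
  have : {n | ∃ S : Finset V, S.card = k ∧ muLocal (⊤ : SimpleGraph V) ↑S = n} =
      {Fintype.card V - k} := by
    refine Set.eq_singleton_iff_unique_mem.mpr ⟨⟨S₀, hS₀, hS₀ ▸ muLocal_top (hS₀ ▸ hk)⟩, ?_⟩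
    rintro _ ⟨S, rfl, rfl⟩
    exact muLocal_top hk
  rw [mu, this, csInf_singleton]

/-- μ_k(K_n) = n - k for 3 ≤ k ≤ n. -/
theorem mu_completeGraph (n k : ℕ) (hk : 3 ≤ k) (hkn : k ≤ n) :
    mu (⊤ : SimpleGraph (Fin n)) k = n - k := by
  simpa using mu_top (V := Fin n) hk (by simpa using hkn)
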